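/- arXiv:1602.02845 — 3 statements merged into one kernel-verified Lean document; each statement's English description precedes it below -/
import Mathlib

section
/- For any symmetric positive definite n×n real matrix X, the trace of its inverse is at least the trace of the inverse of its diagonal part: Tr(X⁻¹) ≥ ∑ᵢ 1/Xᵢᵢ. -/
/-!
Cauchy–Schwarz for the inner product `⟪u, v⟫ = uᵀ X v`, applied to `eᵢ` and `X⁻¹ eᵢ`, gives
`1 = ⟪eᵢ, X⁻¹ eᵢ⟫² ≤ ⟪eᵢ, eᵢ⟫ ⟪X⁻¹ eᵢ, X⁻¹ eᵢ⟫ = Xᵢᵢ (X⁻¹)ᵢᵢ`; sum `1 / Xᵢᵢ ≤ (X⁻¹)ᵢᵢ` over `i`.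
-/

open Matrix

namespace Matrix

variable {n : Type*} [Fintype n]

theorem PosSemidef.dotProduct_mulVec_sq_le {A : Matrix n n ℝ} (hA : A.PosSemidef)
    (x y : n → ℝ) : (x ⬝ᵥ A *ᵥ y) ^ 2 ≤ (x ⬝ᵥ A *ᵥ x) * (y ⬝ᵥ A *ᵥ y) := by
  let := A.toSeminormedAddCommGroup hA
  let := A.toInnerProductSpace hA
  have hinner (u v : n → ℝ) : inner ℝ u v = u ⬝ᵥ A *ᵥ v := by
    rw [dotProduct_comm]; rfl
  simpa only [hinner, sq] using real_inner_mul_inner_self_le x y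

variable [DecidableEq n]

theorem PosDef.one_le_diag_mul_diag_inv {A : Matrix n n ℝ} (hA : A.PosDef) (i : n) :
    1 ≤ A i i * A⁻¹ i i := by
  have hAinv : A * A⁻¹ = 1 := A.mul_nonsing_inv (isUnit_iff_ne_zero.2 hA.det_pos.ne')
  set e : n → ℝ := Pi.single i 1
  have hAe : A *ᵥ (A⁻¹ *ᵥ e) = e := by rw [mulVec_mulVec, hAinv, one_mulVec]
  have h := hA.posSemidef.dotProduct_mulVec_sq_le e (A⁻¹ *ᵥ e)
  rw [hAe] at h
  simpa [e, single_dotProduct, dotProduct_single, mulVec_single] using h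

theorem PosDef.inv_diag_le_diag_inv {A : Matrix n n ℝ} (hA : A.PosDef) (i : n) :
    (A i i)⁻¹ ≤ A⁻¹ i i :=
  (inv_le_iff_one_le_mul₀' hA.diag_pos).2 (hA.one_le_diag_mul_diag_inv i)

end Matrix

/-- For any symmetric positive definite `n × n` real matrix `X`,
`Tr(X⁻¹) ≥ ∑ i, 1 / X i i`. -/
theorem trace_inv_ge_trace_diag_inv {n : ℕ} (X : Matrix (Fin n) (Fin n) ℝ)
    (hX : X.PosDef) :
    ∑ i, 1 / X i i ≤ (X⁻¹).trace := by
  simp only [one_div, trace, diag]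
  exact Finset.sum_le_sum fun i _ => hX.inv_diag_le_diag_inv i
end

section
/- The function mapping a symmetric positive definite matrix H to Tr(H⁻¹) is convex: for symmetric positive definite matrices A, B and t ∈ [0,1], Tr((tA + (1−t)B)⁻¹) ≤ t·Tr(A⁻¹) + (1−t)·Tr(B⁻¹). -/
/-!
`Tr(H⁻¹)` is the maximum over Hermitian `X` of the affine function `H ↦ 2 Tr X − Tr(X H X)`,
attained at `X = H⁻¹`, since the gap `Tr((X − H⁻¹) H (X − H⁻¹))` is nonnegative.
A pointwise maximum of affine functions is convex.
-/

open Matrix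
open scoped ComplexOrder

namespace Matrix.PosDef

variable {n 𝕜 : Type*} [Fintype n] [DecidableEq n] [RCLike 𝕜]

lemma two_mul_trace_sub_trace_mul_mul_le_trace_inv {H X : Matrix n n 𝕜} (hH : H.PosDef)
    (hX : X.IsHermitian) : 2 * X.trace - (X * H * X).trace ≤ H⁻¹.trace := by
  have hHinv : H * H⁻¹ = 1 := mul_nonsing_inv H (isUnit_iff_isUnit_det H |>.mp hH.isUnit)
  have hinvH : H⁻¹ * H = 1 := nonsing_inv_mul H (isUnit_iff_isUnit_det H |>.mp hH.isUnit)
  have hgap : 0 ≤ ((X - H⁻¹) * H * (X - H⁻¹)).trace := by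
    have := hH.posSemidef.mul_mul_conjTranspose_same (X - H⁻¹)
    rw [(hX.sub hH.inv.isHermitian).eq] at this
    exact this.trace_nonneg
  have hexpand : (X - H⁻¹) * H * (X - H⁻¹) = X * H * X - X * (H * H⁻¹) - H⁻¹ * H * X
      + H⁻¹ * (H * H⁻¹) := by
    noncomm_ring
  rw [hexpand, hHinv, hinvH, mul_one, one_mul, mul_one, trace_add, trace_sub, trace_sub] at hgap
  exact sub_nonneg.mp (by convert hgap using 1; ring)

end Matrix.PosDef

lemma Matrix.PosDef.smul_add_one_sub_smul {n : Type*} {A B : Matrix n n ℝ}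
    (hA : A.PosDef) (hB : B.PosDef) {t : ℝ} (ht0 : 0 ≤ t) (ht1 : t ≤ 1) :
    (t • A + (1 - t) • B).PosDef := by
  rcases ht0.eq_or_lt with rfl | ht0
  · simpa using hB
  · exact (hA.smul ht0).add_posSemidef (hB.posSemidef.smul (sub_nonneg.mpr ht1))

/-- The map `H ↦ Tr(H⁻¹)` is convex on symmetric positive definite matrices:
for positive definite `A, B` and `t ∈ [0, 1]`,
`Tr((tA + (1−t)B)⁻¹) ≤ t Tr(A⁻¹) + (1−t) Tr(B⁻¹)`. -/
theorem trace_inv_convex {d : ℕ} (A B : Matrix (Fin d) (Fin d) ℝ)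
    (hA : A.PosDef) (hB : B.PosDef) (t : ℝ) (ht0 : 0 ≤ t) (ht1 : t ≤ 1) :
    ((t • A + (1 - t) • B)⁻¹).trace ≤ t * (A⁻¹).trace + (1 - t) * (B⁻¹).trace := by
  set C := t • A + (1 - t) • B with hC_def
  have hC : C.PosDef := hA.smul_add_one_sub_smul hB ht0 ht1
  set X := C⁻¹
  have hX : X.IsHermitian := hC.inv.isHermitian
  calc X.trace = 2 * X.trace - (X * C * X).trace := by
        rw [nonsing_inv_mul C (isUnit_iff_isUnit_det C |>.mp hC.isUnit), one_mul]; ring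
    _ = t * (2 * X.trace - (X * A * X).trace)
          + (1 - t) * (2 * X.trace - (X * B * X).trace) := by
        simp only [hC_def, Matrix.mul_add, Matrix.add_mul, Matrix.mul_smul, Matrix.smul_mul,
          trace_add, trace_smul, smul_eq_mul]
        ring
    _ ≤ t * A⁻¹.trace + (1 - t) * B⁻¹.trace := by
        have h1t : 0 ≤ 1 - t := sub_nonneg.mpr ht1
        gcongr
        · exact hA.two_mul_trace_sub_trace_mul_mul_le_trace_inv hX
        · exact hB.two_mul_trace_sub_trace_mul_mul_le_trace_inv hX
end

section
/- (Chi-squared upper tail, Laurent–Massart) If Z is a chi-squared random variable with d degrees of freedom, then for every x ≥ 0, P(Z − d ≥ 2√(dx) + 2x) ≤ exp(−x). -/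
/-!
Chernoff bound: for `t < 1/2` a standard Gaussian `G` has `E exp (t G²) = (1 - 2t)^(-1/2)`, so by
independence `P(Z ≥ d + 2√(dx) + 2x) ≤ exp (-t (d + 2√(dx) + 2x)) (1 - 2t)^(-d/2)`. Writing
`x = d s²` and taking `t = s / (1 + 2s)`, the inequality `log w ≤ sinh (log w) = (w - w⁻¹) / 2` at
`w = 1 + 2s` bounds the exponent by `-d s² = -x`.
-/

open MeasureTheory ProbabilityTheory Real
open scoped NNReal ENNReal

lemma Real.log_le_sub_inv_div_two {w : ℝ} (hw : 1 ≤ w) : log w ≤ (w - w⁻¹) / 2 := by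
  rw [← sinh_log (by linarith)]
  exact self_le_sinh_iff.mpr (log_nonneg hw)

lemma mgf_sq_gaussianReal (v : ℝ≥0) {t : ℝ} (ht : 2 * v * t < 1) :
    mgf (fun x ↦ x ^ 2) (gaussianReal 0 v) t = (√(1 - 2 * v * t))⁻¹ := by
  rcases eq_or_ne v 0 with rfl | hv
  · simp [gaussianReal_zero_var, mgf]
  have hv' : (0 : ℝ) < v := by positivity
  have hdensity : ∀ x : ℝ, gaussianPDFReal 0 v x • exp (t * x ^ 2)
      = (√(2 * π * v))⁻¹ * exp (-((1 - 2 * v * t) / (2 * v)) * x ^ 2) := by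
    intro x
    rw [gaussianPDFReal, smul_eq_mul, mul_assoc, ← exp_add]
    congr 2
    field_simp
    ring
  rw [mgf, integral_gaussianReal_eq_integral_smul hv]
  simp_rw [hdensity]
  rw [integral_const_mul, integral_gaussian, ← sqrt_inv, ← sqrt_mul (by positivity), ← sqrt_inv]
  congr 1
  have : 1 - 2 * v * t ≠ 0 := by linarith
  field_simp

section RandomVariables

variable {Ω : Type*} [MeasurableSpace Ω] {μ : Measure Ω} {v : ℝ≥0} {t : ℝ}

lemma mgf_sq_of_map_eq_gaussianReal {X : Ω → ℝ} (hX : μ.map X = gaussianReal 0 v)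
    (ht : 2 * v * t < 1) : mgf (fun ω ↦ X ω ^ 2) μ t = (√(1 - 2 * v * t))⁻¹ := by
  have hXm : AEMeasurable X μ := aemeasurable_of_map_neZero (by rw [hX]; infer_instance)
  rw [← mgf_sq_gaussianReal v ht, ← hX, mgf_map hXm (by fun_prop)]
  rfl

lemma mgf_sum_sq_of_map_eq_gaussianReal {ι : Type*} [Fintype ι] {G : ι → Ω → ℝ}
    (hindep : iIndepFun G μ) (hG : ∀ i, μ.map (G i) = gaussianReal 0 v) (ht : 2 * v * t < 1) :
    mgf (fun ω ↦ ∑ i, G i ω ^ 2) μ t = (√(1 - 2 * v * t))⁻¹ ^ Fintype.card ι := by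
  have hGm : ∀ i, AEMeasurable (G i) μ :=
    fun i ↦ aemeasurable_of_map_neZero (by rw [hG i]; infer_instance)
  have hsq : iIndepFun (fun i ω ↦ G i ω ^ 2) μ :=
    hindep.comp (fun _ y ↦ y ^ 2) (fun _ ↦ by fun_prop)
  have hsum := hsq.mgf_sum₀ (t := t) (fun i ↦ (hGm i).pow_const 2) Finset.univ
  simp only [Finset.sum_fn, mgf_sq_of_map_eq_gaussianReal (hG _) ht] at hsum
  rw [hsum, Finset.prod_const, Finset.card_univ]

lemma measure_sum_sq_ge_le_of_map_eq_gaussianReal [IsProbabilityMeasure μ] {ι : Type*}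
    [Fintype ι] {G : ι → Ω → ℝ} (hindep : iIndepFun G μ)
    (hG : ∀ i, μ.map (G i) = gaussianReal 0 v) (ht₀ : 0 ≤ t) (ht : 2 * v * t < 1) (ε : ℝ) :
    μ {ω | ε ≤ ∑ i, G i ω ^ 2} ≤
      ENNReal.ofReal (exp (-t * ε) * (√(1 - 2 * v * t))⁻¹ ^ Fintype.card ι) := by
  have hmgf := mgf_sum_sq_of_map_eq_gaussianReal hindep hG ht
  have hint : Integrable (fun ω ↦ exp (t * ∑ i, G i ω ^ 2)) μ := by
    -- a non-integrable function has Bochner integral `0`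
    rw [← mgf_pos_iff, hmgf]
    exact pow_pos (inv_pos.mpr (sqrt_pos.mpr (by linarith))) _
  rw [← hmgf, ENNReal.le_ofReal_iff_toReal_le (measure_ne_top _ _)
    (mul_nonneg (exp_pos _).le mgf_nonneg)]
  exact measure_ge_le_exp_mul_mgf ε ht₀ hint

end RandomVariables

lemma exp_chernoff_chiSquared_le (d : ℕ) {s : ℝ} (hs : 0 ≤ s) :
    exp (-(s / (1 + 2 * s)) * (d + 2 * (d * s) + 2 * (d * s ^ 2))) *
        (√(1 - 2 * (s / (1 + 2 * s))))⁻¹ ^ d ≤ exp (-(d * s ^ 2)) := by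
  have hpos : 0 < 1 + 2 * s := by linarith
  have hsqrt : (√(1 - 2 * (s / (1 + 2 * s))))⁻¹ = exp (log (1 + 2 * s) / 2) := by
    rw [show 1 - 2 * (s / (1 + 2 * s)) = (1 + 2 * s)⁻¹ by field_simp; ring, sqrt_inv, inv_inv,
      ← log_sqrt hpos.le, exp_log (sqrt_pos.mpr hpos)]
  rw [hsqrt, ← exp_nat_mul, ← exp_add, exp_le_exp]
  have hlog := mul_le_mul_of_nonneg_left (log_le_sub_inv_div_two (w := 1 + 2 * s) (by linarith))
    (by positivity : (0 : ℝ) ≤ d / 2)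
  have hexponent : -(s / (1 + 2 * s)) * (d + 2 * (d * s) + 2 * (d * s ^ 2)) +
      d / 2 * ((1 + 2 * s - (1 + 2 * s)⁻¹) / 2) = -(d * s ^ 2) := by
    field_simp
    ring
  linarith

theorem chi_squared_upper_tail_general {Ω : Type*} [MeasurableSpace Ω]
    (μ : Measure Ω) [IsProbabilityMeasure μ] (d : ℕ)
    (G : Fin d → Ω → ℝ)
    (hindep : iIndepFun G μ)
    (hgauss : ∀ i, μ.map (G i) = gaussianReal 0 1)
    (x : ℝ) (hx : 0 ≤ x) :
    μ {ω | 2 * Real.sqrt (d * x) + 2 * x ≤ (∑ i, (G i ω) ^ 2) - d} ≤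
      ENNReal.ofReal (Real.exp (-x)) := by
  obtain rfl | hd := Nat.eq_zero_or_pos d
  · rcases hx.eq_or_lt with rfl | hx
    · simp
    · have hempty : ¬2 * x ≤ 0 := by linarith
      simp [hempty]
  set s := √(x / d)
  have hxs : x = d * s ^ 2 := by
    rw [sq_sqrt (by positivity)]
    field_simp
  have hsqrt : √(d * x) = d * s := by
    rw [hxs, show (d : ℝ) * (d * s ^ 2) = (d * s) ^ 2 by ring, sqrt_sq (by positivity)]
  set t := s / (1 + 2 * s)
  have ht : 2 * t < 1 := by
    rw [mul_div_assoc', div_lt_one (by positivity)]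
    linarith
  calc _ = μ {ω | d + 2 * (d * s) + 2 * (d * s ^ 2) ≤ ∑ i, G i ω ^ 2} := by
        congr 1
        ext ω
        simp only [Set.mem_ofPred_eq, hsqrt, ← hxs]
        constructor <;> intro h <;> linarith
    _ ≤ ENNReal.ofReal (exp (-t * (d + 2 * (d * s) + 2 * (d * s ^ 2))) *
          (√(1 - 2 * t))⁻¹ ^ d) := by
        simpa using measure_sum_sq_ge_le_of_map_eq_gaussianReal hindep hgauss (by positivity)
          (by simpa using ht) _
    _ ≤ ENNReal.ofReal (exp (-x)) := by
        rw [hxs]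
        gcongr
        exact exp_chernoff_chiSquared_le d (sqrt_nonneg _)

/-- (Laurent–Massart) chi-squared upper tail bound: if `Z = ∑_{i<d} Gᵢ²` where the `Gᵢ`
are i.i.d. standard Gaussian random variables, then for every `x ≥ 0`,
`P(Z − d ≥ 2√(dx) + 2x) ≤ exp(−x)`. -/
theorem chi_squared_upper_tail {Ω : Type*} [MeasurableSpace Ω]
    (μ : Measure Ω) [IsProbabilityMeasure μ] (d : ℕ)
    (G : Fin d → Ω → ℝ) (hmeas : ∀ i, Measurable (G i))
    (hindep : iIndepFun G μ)
    (hgauss : ∀ i, μ.map (G i) = gaussianReal 0 1)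
    (x : ℝ) (hx : 0 ≤ x) :
    μ {ω | 2 * Real.sqrt (d * x) + 2 * x ≤ (∑ i, (G i ω) ^ 2) - d} ≤
      ENNReal.ofReal (Real.exp (-x)) :=
  chi_squared_upper_tail_general μ d G hindep hgauss x hx
end
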